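/- Let B = ℂ[x,y,z] be the polynomial ring in three variables and let A = ℂ[x, x²y + z²] be the ℂ-subalgebra generated by x and x²y + z². Then B is faithfully flat as an A-module. -/

import Mathlib

/-!
Put `w = x²y + z²`. Over `A = k[x, w]`, the ring `B = k[x, y, z]` is `A[y][z]` with the single
relation `z² + x²y − w = 0`, monic in `z`: the evident maps between `A[Y][Z]/(Z² + x²Y − w)` and
`B` are mutually inverse. Hence `B` is free over `A[y]` with basis `1, z`, so free over `A` with
basis `yⁱ, yⁱz`, and a nonzero free module is faithfully flat.
-/

open MvPolynomial

/-- The subalgebra `A = ℂ[x, x²y + z²] ⊆ B = ℂ[x,y,z]` generated by the algebraically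
independent elements `x` and `x²y + z²`; it is the kernel of the locally nilpotent
derivation `δ` with `δ(x) = 0`, `δ(y) = −2z`, `δ(z) = x²`. -/
noncomputable def kerSubalgebra18 : Subalgebra ℂ (MvPolynomial (Fin 3) ℂ) :=
  Algebra.adjoin ℂ {X 0, (X 0) ^ 2 * X 1 + (X 2) ^ 2}

open scoped Polynomial

theorem Algebra.adjoin_pair_subtype_eq_top {R A : Type*} [CommSemiring R] [Semiring A]
    [Algebra R A] (a b : A) :
    Algebra.adjoin R {(⟨a, Algebra.subset_adjoin (by simp)⟩ : Algebra.adjoin R {a, b}),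
      ⟨b, Algebra.subset_adjoin (by simp)⟩} = ⊤ := by
  have hs : ({⟨a, Algebra.subset_adjoin (by simp)⟩, ⟨b, Algebra.subset_adjoin (by simp)⟩} :
      Set (Algebra.adjoin R {a, b})) = Subtype.val ⁻¹' {a, b} := by
    ext ⟨c, hc⟩
    simp [Subtype.ext_iff]
  rw [hs]
  exact Algebra.adjoin_adjoin_coe_preimage

noncomputable section

variable {k R : Type*} [CommRing k] [CommRing R]

section Relation

variable (u v : R)

/-- `Z² + u²Y − v` over `R[Y]`; with `u = x` and `v = x²y + z²` it is the relation satisfied by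
`z` over `A[y]`. -/
def quadricRel : R[X][X] :=
  Polynomial.X ^ 2 + Polynomial.C (Polynomial.C (u ^ 2) * Polynomial.X - Polynomial.C v)

theorem quadricRel_monic : (quadricRel u v).Monic :=
  Polynomial.monic_X_pow_add <| Polynomial.degree_C_le.trans_lt (by norm_num)

theorem root_quadricRel_sq : AdjoinRoot.root (quadricRel u v) ^ 2 =
    AdjoinRoot.of _ (Polynomial.C v) - AdjoinRoot.of _ (Polynomial.C (u ^ 2) * Polynomial.X) := by
  have h := AdjoinRoot.eval₂_root (quadricRel u v)
  conv at h => lhs; arg 3; rw [quadricRel]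
  simp only [map_sub, Polynomial.eval₂_add, Polynomial.eval₂_sub, Polynomial.eval₂_pow,
    Polynomial.eval₂_X, Polynomial.eval₂_C] at h
  linear_combination h

def mvPolynomialToQuadricRel [Algebra k R] :
    MvPolynomial (Fin 3) k →ₐ[k] AdjoinRoot (quadricRel u v) :=
  aeval ![AdjoinRoot.of _ (Polynomial.C u), AdjoinRoot.of _ Polynomial.X, AdjoinRoot.root _]

theorem mvPolynomialToQuadricRel_X [Algebra k R] (i : Fin 3) :
    mvPolynomialToQuadricRel (k := k) u v (X i) =
      ![AdjoinRoot.of _ (Polynomial.C u), AdjoinRoot.of _ Polynomial.X, AdjoinRoot.root _] i :=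
  aeval_X _ i

end Relation

section ToMvPolynomial

variable [Algebra R (MvPolynomial (Fin 3) k)] {u v : R}
  (hu : algebraMap R (MvPolynomial (Fin 3) k) u = X 0)
  (hv : algebraMap R (MvPolynomial (Fin 3) k) v = X 0 ^ 2 * X 1 + X 2 ^ 2)

include hu hv in
theorem eval₂_quadricRel_X_two :
    (quadricRel u v).eval₂ (Polynomial.aeval (R := R) (X 1 : MvPolynomial (Fin 3) k)).toRingHom
      (X 2) = 0 := by
  simp only [quadricRel, Polynomial.eval₂_add, Polynomial.eval₂_pow, Polynomial.eval₂_X,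
    Polynomial.eval₂_C]
  simp [hu, hv]

def quadricRelToMvPolynomial : AdjoinRoot (quadricRel u v) →ₐ[R] MvPolynomial (Fin 3) k :=
  AdjoinRoot.liftAlgHom _ (Polynomial.aeval (X 1)) (X 2) (eval₂_quadricRel_X_two hu hv)

theorem quadricRelToMvPolynomial_of (p : R[X]) :
    quadricRelToMvPolynomial hu hv (AdjoinRoot.of _ p) = Polynomial.aeval (X 1) p :=
  AdjoinRoot.liftAlgHom_of _ _ _ _ p

theorem quadricRelToMvPolynomial_root :
    quadricRelToMvPolynomial hu hv (AdjoinRoot.root _) = X 2 :=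
  AdjoinRoot.liftAlgHom_root _ _ _ _

end ToMvPolynomial

variable [Algebra k R] [Algebra R (MvPolynomial (Fin 3) k)]
  [IsScalarTower k R (MvPolynomial (Fin 3) k)] {u v : R}
  (hu : algebraMap R (MvPolynomial (Fin 3) k) u = X 0)
  (hv : algebraMap R (MvPolynomial (Fin 3) k) v = X 0 ^ 2 * X 1 + X 2 ^ 2)
  (hgen : Algebra.adjoin k {u, v} = ⊤)

include hu hv hgen in
theorem mvPolynomialToQuadricRel_algebraMap (a : R) :
    mvPolynomialToQuadricRel u v (algebraMap R (MvPolynomial (Fin 3) k) a) =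
      algebraMap R (AdjoinRoot (quadricRel u v)) a := by
  suffices (mvPolynomialToQuadricRel u v).comp (IsScalarTower.toAlgHom k R _) =
      IsScalarTower.toAlgHom k R _ from congr($this a)
  refine AlgHom.ext_of_adjoin_eq_top hgen ?_
  rintro _ (rfl | rfl)
  · simp [hu, mvPolynomialToQuadricRel_X, AdjoinRoot.algebraMap_eq']
  · simp [hv, mvPolynomialToQuadricRel_X, root_quadricRel_sq, AdjoinRoot.algebraMap_eq']

def quadricRelEquivMvPolynomial : AdjoinRoot (quadricRel u v) ≃ₐ[R] MvPolynomial (Fin 3) k :=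
  AlgEquiv.ofAlgHom (quadricRelToMvPolynomial hu hv)
    { mvPolynomialToQuadricRel u v with
      commutes' := mvPolynomialToQuadricRel_algebraMap hu hv hgen }
    (by
      apply AlgHom.restrictScalars_injective k
      refine MvPolynomial.algHom_ext fun i => ?_
      fin_cases i <;> simp [quadricRelToMvPolynomial_of, quadricRelToMvPolynomial_root,
        mvPolynomialToQuadricRel_X, hu])
    (by
      ext
      · simp [quadricRelToMvPolynomial_of, mvPolynomialToQuadricRel_X]
      · simp [quadricRelToMvPolynomial_root, mvPolynomialToQuadricRel_X])

include hu hv hgen in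
theorem MvPolynomial.free_over_x_and_x_sq_mul_y_add_z_sq : Module.Free R (MvPolynomial (Fin 3) k) :=
  have := (quadricRel_monic u v).free_adjoinRoot
  have : Module.Free R (AdjoinRoot (quadricRel u v)) := Module.Free.trans (S := R[X])
  .of_equiv (quadricRelEquivMvPolynomial hu hv hgen).toLinearEquiv

end

/-- `B = ℂ[x,y,z]` is faithfully flat as a module over its subalgebra
`A = ℂ[x, x²y + z²]`. -/
theorem stmt18 :
    Module.FaithfullyFlat ↥kerSubalgebra18 (MvPolynomial (Fin 3) ℂ) :=
  have := MvPolynomial.free_over_x_and_x_sq_mul_y_add_z_sq (k := ℂ) (R := kerSubalgebra18) rfl rfl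
    (Algebra.adjoin_pair_subtype_eq_top _ _)
  inferInstance
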